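/- arXiv:2105.02510 — 4 statements merged into one kernel-verified Lean document; each statement's English description precedes it below -/
import Mathlib

section
/- Let c ∈ ℕ with c > 0, n ∈ ℕ, y ∈ [0,1]^n, and q ∈ ℕ^n with q_i ≤ c for all i. Then min{c, ∑_{i=1}^n y_i q_i} ≥ c − c·∏_{i=1}^n (1 − y_i q_i / c). -/
/-! Writing `x i = y i q i / c ∈ [0, 1]`, the product `∏ (1 - x i)` lies in `[0, 1]`, which gives
the bound by `c`, and by the Weierstrass product inequality it is at least `1 - ∑ x i`, which gives
the bound by `∑ y i q i = c ∑ x i`. -/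

namespace Finset

variable {ι R : Type*}

theorem one_sub_sum_le_prod_one_sub [CommRing R] [LinearOrder R] [IsStrictOrderedRing R]
    (s : Finset ι) {x : ι → R} (h0 : ∀ i ∈ s, 0 ≤ x i) (h1 : ∀ i ∈ s, x i ≤ 1) :
    1 - ∑ i ∈ s, x i ≤ ∏ i ∈ s, (1 - x i) := by
  classical
  induction s using Finset.induction_on with
  | empty => simp
  | insert a s ha ih =>
    rw [sum_insert ha, prod_insert ha]
    have hxa : 0 ≤ x a := h0 a (mem_insert_self a s)
    have hxa' : 0 ≤ 1 - x a := sub_nonneg.2 (h1 a (mem_insert_self a s))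
    have hsum : 0 ≤ ∑ i ∈ s, x i := sum_nonneg fun i hi ↦ h0 i (mem_insert_of_mem hi)
    have ih := ih (fun i hi ↦ h0 i (mem_insert_of_mem hi)) fun i hi ↦ h1 i (mem_insert_of_mem hi)
    calc 1 - (x a + ∑ i ∈ s, x i)
        ≤ (1 - x a) * (1 - ∑ i ∈ s, x i) := by nlinarith
      _ ≤ (1 - x a) * ∏ i ∈ s, (1 - x i) := mul_le_mul_of_nonneg_left ih hxa'

theorem sub_mul_prod_one_sub_div_le_min [Field R] [LinearOrder R] [IsStrictOrderedRing R]
    (s : Finset ι) {c : R} (hc : 0 ≤ c) {a : ι → R} (ha0 : ∀ i ∈ s, 0 ≤ a i)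
    (hac : ∀ i ∈ s, a i ≤ c) :
    c - c * ∏ i ∈ s, (1 - a i / c) ≤ min c (∑ i ∈ s, a i) := by
  have hx0 : ∀ i ∈ s, 0 ≤ a i / c := fun i hi ↦ div_nonneg (ha0 i hi) hc
  have hx1 : ∀ i ∈ s, a i / c ≤ 1 := fun i hi ↦ div_le_one_of_le₀ (hac i hi) hc
  have hprod : 0 ≤ ∏ i ∈ s, (1 - a i / c) := prod_nonneg fun i hi ↦ sub_nonneg.2 (hx1 i hi)
  -- when `c = 0` every `a i` vanishes, so `c * (a i / c) = a i` holds despite the junk division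
  have hcancel : ∑ i ∈ s, c * (a i / c) = ∑ i ∈ s, a i :=
    sum_congr rfl fun i hi ↦ mul_div_cancel_of_imp' fun h ↦ by linarith [ha0 i hi, hac i hi]
  refine le_min (by nlinarith) ?_
  calc c - c * ∏ i ∈ s, (1 - a i / c)
      ≤ c - c * (1 - ∑ i ∈ s, a i / c) := by
        gcongr
        exact one_sub_sum_le_prod_one_sub s hx0 hx1
    _ = ∑ i ∈ s, c * (a i / c) := by rw [← mul_sum]; ring
    _ = ∑ i ∈ s, a i := hcancel

end Finset

theorem stmt_1_general (c : ℕ) (n : ℕ) (y : Fin n → ℝ) (q : Fin n → ℕ)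
    (hy : ∀ i, y i ∈ Set.Icc (0 : ℝ) 1) (hq : ∀ i, q i ≤ c) :
    min (c : ℝ) (∑ i, y i * (q i : ℝ)) ≥
      (c : ℝ) - (c : ℝ) * ∏ i, (1 - y i * (q i : ℝ) / (c : ℝ)) :=
  Finset.sub_mul_prod_one_sub_div_le_min _ c.cast_nonneg
    (fun i _ ↦ mul_nonneg (hy i).1 (q i).cast_nonneg) fun i _ ↦
      (mul_le_of_le_one_left (q i).cast_nonneg (hy i).2).trans (by exact_mod_cast hq i)

/-- Lemma 5: for `c > 0`, `y i ∈ [0,1]`, `q i ≤ c`,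
`min c (∑ y i q i) ≥ c − c ∏ (1 − y i q i / c)`. -/
theorem stmt_1 (c : ℕ) (hc : 0 < c) (n : ℕ) (y : Fin n → ℝ) (q : Fin n → ℕ)
    (hy : ∀ i, y i ∈ Set.Icc (0 : ℝ) 1) (hq : ∀ i, q i ≤ c) :
    min (c : ℝ) (∑ i, y i * (q i : ℝ)) ≥
      (c : ℝ) - (c : ℝ) * ∏ i, (1 - y i * (q i : ℝ) / (c : ℝ)) :=
  stmt_1_general c n y q hy hq
end

section
/- Let c ∈ ℕ with c > 0, n ∈ ℕ with n ≥ 1, y ∈ [0,1]^n, and q ∈ ℕ^n with q_i ≤ c for all i. Then c − c·∏_{i=1}^n (1 − y_i q_i / c) ≥ (1 − 1/e) · min{c, ∑_{i=1}^n y_i q_i}. -/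
/-- Lemma 6: for `c > 0`, `n ≥ 1`, `y i ∈ [0,1]`, `q i ≤ c`,
`c − c ∏ (1 − y i q i / c) ≥ (1 − 1/e) · min c (∑ y i q i)`. -/
theorem stmt_2 (c : ℕ) (hc : 0 < c) (n : ℕ) (hn : 1 ≤ n)
    (y : Fin n → ℝ) (q : Fin n → ℕ)
    (hy : ∀ i, y i ∈ Set.Icc (0 : ℝ) 1) (hq : ∀ i, q i ≤ c) :
    (c : ℝ) - (c : ℝ) * ∏ i, (1 - y i * (q i : ℝ) / (c : ℝ)) ≥
      (1 - 1 / Real.exp 1) * min (c : ℝ) (∑ i, y i * (q i : ℝ)) := by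
  have hcpos : (0:ℝ) < c := by exact_mod_cast hc
  set x : Fin n → ℝ := fun i => y i * (q i : ℝ) / (c : ℝ) with hxdef
  have hx0 : ∀ i, 0 ≤ x i := fun i => by
    have := (hy i).1
    positivity
  have hx1 : ∀ i, x i ≤ 1 := fun i => by
    have h1 := (hy i).1
    have h2 := (hy i).2
    have hqc : (q i : ℝ) ≤ c := by exact_mod_cast hq i
    rw [hxdef, div_le_one hcpos]
    calc y i * (q i : ℝ) ≤ 1 * (q i : ℝ) := by
          apply mul_le_mul_of_nonneg_right h2; positivity
      _ = (q i : ℝ) := one_mul _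
      _ ≤ c := hqc
  set T : ℝ := ∑ i, x i with hTdef
  have hT0 : 0 ≤ T := Finset.sum_nonneg fun i _ => hx0 i
  set m : ℝ := min 1 T with hmdef
  have hm0 : 0 ≤ m := le_min zero_le_one hT0
  have hm1 : m ≤ 1 := min_le_left _ _
  have hmT : m ≤ T := min_le_right _ _
  -- product bound
  have hprod : ∏ i, (1 - x i) ≤ Real.exp (-T) := by
    calc ∏ i, (1 - x i) ≤ ∏ i, Real.exp (-(x i)) := by
          apply Finset.prod_le_prod
          · intro i _; linarith [hx1 i]
          · intro i _
            have := Real.add_one_le_exp (-(x i))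
            linarith
      _ = Real.exp (-T) := by
          rw [← Real.exp_sum]
          congr 1
          rw [hTdef, ← Finset.sum_neg_distrib]
  have hexp : Real.exp (-T) ≤ Real.exp (-m) := Real.exp_le_exp.mpr (by linarith)
  -- convexity: exp(-m) ≤ (1-m) + m/e
  have hconv : Real.exp (-m) ≤ (1 - m) * 1 + m * (1 / Real.exp 1) := by
    calc Real.exp (-m) = Real.exp ((1-m) * 0 + m * (-1)) := by ring_nf
      _ ≤ (1-m) * Real.exp 0 + m * Real.exp (-1) := by
          exact convexOn_exp.2 (Set.mem_univ _) (Set.mem_univ _)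
            (by linarith) hm0 (by ring)
      _ = (1 - m) * 1 + m * (1 / Real.exp 1) := by
          rw [Real.exp_zero, Real.exp_neg, one_div]
  have key : 1 - ∏ i, (1 - x i) ≥ (1 - 1 / Real.exp 1) * m := by
    have : Real.exp (-m) ≤ 1 - (1 - 1/Real.exp 1) * m := by
      calc Real.exp (-m) ≤ (1 - m) * 1 + m * (1 / Real.exp 1) := hconv
        _ = 1 - (1 - 1/Real.exp 1) * m := by ring
    linarith [hprod.trans hexp]
  -- relate min c S = c * m
  have hS : ∑ i, y i * (q i : ℝ) = c * T := by
    rw [hTdef, Finset.mul_sum]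
    apply Finset.sum_congr rfl
    intro i _
    rw [hxdef]
    field_simp
  have hmin : min (c:ℝ) (∑ i, y i * (q i : ℝ)) = c * m := by
    rw [hS, hmdef]
    rcases le_total (1:ℝ) T with h | h
    · rw [min_eq_left h, min_eq_left (by nlinarith), mul_one]
    · rw [min_eq_right h, min_eq_right (by nlinarith)]
  rw [hmin]
  have he : 1 - 1 / Real.exp 1 ≥ 0 := by
    have : Real.exp 1 ≥ 1 := Real.one_le_exp zero_le_one
    have : 1 / Real.exp 1 ≤ 1 := by
      rw [div_le_one (Real.exp_pos 1)]; exact this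
    linarith
  calc (c:ℝ) - c * ∏ i, (1 - x i) = c * (1 - ∏ i, (1 - x i)) := by ring
    _ ≥ c * ((1 - 1/Real.exp 1) * m) := by
        apply mul_le_mul_of_nonneg_left key (le_of_lt hcpos)
    _ = (1 - 1/Real.exp 1) * (c * m) := by ring
end

section
/- The weighted negative entropy Φ(y) = ∑_{i=1}^n s_i y_i log(y_i), defined on the positive orthant, is θ-strongly convex with respect to the weighted ℓ1-norm ‖y‖_{ℓ1(s)} = ∑_i s_i |y_i| on the set {y ∈ (0,1]^n}, with θ = 1/(s_max · n), where s_max = max_i s_i; i.e., for all y, y' in (0,1]^n, (∇Φ(y') − ∇Φ(y))ᵀ(y' − y) ≥ θ·‖y' − y‖²_{ℓ1(s)}. -/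
/- Each coordinate of the gradient difference pairs with the coordinate difference to give at
least its square, because `log` has slope `≥ 1` on `(0, 1]`; Cauchy–Schwarz with weights `s`
then compares the weighted `ℓ²`-sum with the squared `ℓ1(s)` norm, at the cost of `∑ s ≤ s_max · n`. -/

open Finset Real

lemma sub_le_log_sub_log {x y : ℝ} (hy : 0 < y) (hyx : y ≤ x) (hx : x ≤ 1) :
    x - y ≤ log x - log y := by
  have hx0 : 0 < x := hy.trans_le hyx
  calc x - y ≤ (x - y) / x := le_div_self (sub_nonneg.2 hyx) hx0 hx
    _ = 1 - (x / y)⁻¹ := by field_simp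
    _ ≤ log (x / y) := one_sub_inv_le_log_of_pos (by positivity)
    _ = log x - log y := log_div hx0.ne' hy.ne'

lemma sq_sub_le_log_sub_log_mul_sub {x y : ℝ} (hx : x ∈ Set.Ioc (0 : ℝ) 1)
    (hy : y ∈ Set.Ioc (0 : ℝ) 1) : (x - y) ^ 2 ≤ (log x - log y) * (x - y) := by
  rcases le_total y x with hyx | hxy
  · have := sub_le_log_sub_log hy.1 hyx hx.2
    nlinarith
  · have := sub_le_log_sub_log hx.1 hxy hy.2
    nlinarith

lemma sq_sum_mul_abs_le_sum_mul_sum_mul_sq {ι : Type*} (t : Finset ι) {w x : ι → ℝ}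
    (hw : ∀ i ∈ t, 0 ≤ w i) :
    (∑ i ∈ t, w i * |x i|) ^ 2 ≤ (∑ i ∈ t, w i) * ∑ i ∈ t, w i * x i ^ 2 :=
  sum_sq_le_sum_mul_sum_of_sq_le_mul t hw (fun i hi => mul_nonneg (hw i hi) (sq_nonneg _))
    fun i _ => le_of_eq (by rw [mul_pow, sq_abs]; ring)

/-- Strong convexity of the weighted negative entropy
`Φ(y) = ∑ s i · y i · log (y i)` w.r.t. the weighted `ℓ1(s)` norm on `(0,1]^n`
(dimension `n + 1 ≥ 1`), with modulus `θ = 1 / (s_max · n)`: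
`(∇Φ(y') − ∇Φ(y))ᵀ (y' − y) ≥ θ ‖y' − y‖²_{ℓ1(s)}`. -/
theorem stmt_7 (n : ℕ) (s : Fin (n + 1) → ℝ) (hs : ∀ i, 0 < s i)
    (y y' : Fin (n + 1) → ℝ)
    (hy : ∀ i, y i ∈ Set.Ioc (0 : ℝ) 1) (hy' : ∀ i, y' i ∈ Set.Ioc (0 : ℝ) 1) :
    ∑ i, (s i * (Real.log (y' i) + 1) - s i * (Real.log (y i) + 1)) * (y' i - y i) ≥
      (1 / ((Finset.univ.sup' Finset.univ_nonempty s) * ((n : ℝ) + 1))) *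
        (∑ i, s i * |y' i - y i|) ^ 2 := by
  set M := univ.sup' univ_nonempty s
  have hM : 0 < M := (hs 0).trans_le (le_sup' s (mem_univ 0))
  have hsum : ∑ i, s i ≤ M * ((n : ℝ) + 1) := by
    calc ∑ i, s i ≤ #(univ : Finset (Fin (n + 1))) • M :=
          sum_le_card_nsmul _ _ _ fun i hi => le_sup' s hi
      _ = M * ((n : ℝ) + 1) := by simp [mul_comm]
  have hQ : 0 ≤ ∑ i, s i * (y' i - y i) ^ 2 :=
    sum_nonneg fun i _ => mul_nonneg (hs i).le (sq_nonneg _)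
  have hlog : ∑ i, s i * (y' i - y i) ^ 2 ≤
      ∑ i, (s i * (log (y' i) + 1) - s i * (log (y i) + 1)) * (y' i - y i) :=
    sum_le_sum fun i _ => by
      have := mul_le_mul_of_nonneg_left (sq_sub_le_log_sub_log_mul_sub (hy' i) (hy i)) (hs i).le
      linarith
  have hcs := sq_sum_mul_abs_le_sum_mul_sum_mul_sq univ (x := fun i => y' i - y i)
    fun i _ => (hs i).le
  calc 1 / (M * ((n : ℝ) + 1)) * (∑ i, s i * |y' i - y i|) ^ 2
      ≤ 1 / (M * ((n : ℝ) + 1)) * (M * ((n : ℝ) + 1) * ∑ i, s i * (y' i - y i) ^ 2) := by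
        gcongr
        exact hcs.trans (mul_le_mul_of_nonneg_right hsum hQ)
    _ = ∑ i, s i * (y' i - y i) ^ 2 := by field_simp
    _ ≤ _ := hlog
end

section
/- For all a, b ∈ (0,1], it holds that (a − b)/(log a − log b) ≤ (a + b)/2 when a ≠ b (and the quotient is interpreted as a when a = b); in particular, the logarithmic mean of two numbers in (0,1] is at most their arithmetic mean. -/
open Real

lemma aux_g (x : ℝ) (hx : 1 ≤ x) : 2 * (x - 1) ≤ (x + 1) * Real.log x := by
  have hd : ∀ y : ℝ, 0 < y → HasDerivAt (fun x : ℝ => (x + 1) * Real.log x - 2 * (x - 1))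
      (1 * Real.log y + (y + 1) * (1 / y) - 2 * 1) y := by
    intro y hy
    have h1 : HasDerivAt (fun x : ℝ => x + 1) 1 y := (hasDerivAt_id y).add_const 1
    have h2 : HasDerivAt Real.log (1 / y) y := by
      simpa [one_div] using Real.hasDerivAt_log hy.ne'
    have h3 : HasDerivAt (fun x : ℝ => x - 1) 1 y := (hasDerivAt_id y).sub_const 1
    exact (h1.mul h2).sub (h3.const_mul 2)
  have hmono : MonotoneOn (fun x : ℝ => (x + 1) * Real.log x - 2 * (x - 1)) (Set.Ici 1) := by
    apply monotoneOn_of_deriv_nonneg (convex_Ici 1)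
    · apply ContinuousOn.sub
      · exact ((continuous_id.add continuous_const).continuousOn).mul
          (Real.continuousOn_log.mono (by intro y hy; simp at hy ⊢; linarith))
      · fun_prop
    · intro y hy
      simp only [interior_Ici, Set.mem_Ioi] at hy
      exact (hd y (by linarith)).differentiableAt.differentiableWithinAt
    · intro y hy
      simp only [interior_Ici, Set.mem_Ioi] at hy
      have hy0 : (0 : ℝ) < y := by linarith
      rw [(hd y hy0).deriv]
      have hlog : Real.log (1 / y) ≤ 1 / y - 1 :=
        Real.log_le_sub_one_of_pos (by positivity)
      rw [Real.log_div one_ne_zero hy0.ne', Real.log_one] at hlog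
      have h5 : 1 - 1 / y ≤ Real.log y := by linarith
      have hfield : (y + 1) * (1 / y) = 1 + 1 / y := by field_simp
      rw [hfield]
      linarith
  have h1 := hmono (Set.self_mem_Ici) hx hx
  simp only [Real.log_one] at h1
  nlinarith [h1]

lemma key8 (a b : ℝ) (ha : 0 < a) (hb : 0 < b) (hlt : b < a) :
    (a - b) / (Real.log a - Real.log b) ≤ (a + b) / 2 := by
  have hlog : Real.log b < Real.log a := Real.log_lt_log hb hlt
  have h := aux_g (a / b) (by rw [le_div_iff₀ hb]; linarith)
  rw [Real.log_div (ne_of_gt ha) (ne_of_gt hb)] at h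
  have h2 : 2 * (a - b) ≤ (a + b) * (Real.log a - Real.log b) := by
    have hm := mul_le_mul_of_nonneg_left h hb.le
    have e1 : b * (2 * (a / b - 1)) = 2 * (a - b) := by field_simp
    have e2 : b * ((a / b + 1) * (Real.log a - Real.log b)) =
        (a + b) * (Real.log a - Real.log b) := by field_simp
    linarith
  rw [div_le_div_iff₀ (by linarith) (by norm_num)]
  linarith

/-- The logarithmic mean of two distinct numbers in `(0,1]` is at most their
arithmetic mean: `(a − b)/(log a − log b) ≤ (a + b)/2`. -/
theorem stmt_8 (a b : ℝ) (ha : a ∈ Set.Ioc (0 : ℝ) 1) (hb : b ∈ Set.Ioc (0 : ℝ) 1)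
    (hab : a ≠ b) :
    (a - b) / (Real.log a - Real.log b) ≤ (a + b) / 2 := by
  rcases lt_or_gt_of_ne hab with h | h
  · have hk := key8 b a hb.1 ha.1 h
    have e : (b - a) / (Real.log b - Real.log a) = (a - b) / (Real.log a - Real.log b) := by
      rw [← neg_sub a b, ← neg_sub (Real.log a), neg_div_neg_eq]
    rw [e] at hk
    linarith
  · exact key8 a b ha.1 hb.1 h
end
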